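/- arXiv:2111.08558 — 2 statements merged into one kernel-verified Lean document; each statement's English description precedes it below -/
import Mathlib

section
/- Let $K$ be a field of characteristic not $2$ and $a \in K^\times$. If $a$ is a sum of four squares in $K$ but not a sum of three squares, then there exists $c \in K^\times$ such that the forms $\langle 1, 1, 1, c \rangle$ and $\langle 1, -a, -c \rangle$ are both isotropic over $K$. -/
theorem exists_c_isotropic_of_length_four
    (K : Type*) [Field K] (hchar : ringChar K ≠ 2)
    (a : K) (ha : a ≠ 0)
    (h4 : ∃ c₁ c₂ c₃ c₄ : K, a = c₁ ^ 2 + c₂ ^ 2 + c₃ ^ 2 + c₄ ^ 2)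
    (h3 : ¬ ∃ c₁ c₂ c₃ : K, a = c₁ ^ 2 + c₂ ^ 2 + c₃ ^ 2) :
    ∃ c : K, c ≠ 0 ∧
      (∃ x y z w : K, ¬(x = 0 ∧ y = 0 ∧ z = 0 ∧ w = 0) ∧
        x ^ 2 + y ^ 2 + z ^ 2 + c * w ^ 2 = 0) ∧
      (∃ x y z : K, ¬(x = 0 ∧ y = 0 ∧ z = 0) ∧
        x ^ 2 - a * y ^ 2 - c * z ^ 2 = 0) := by
  obtain ⟨c₁, c₂, c₃, c₄, hsum⟩ := h4
  refine ⟨-(c₁ ^ 2 + c₂ ^ 2 + c₃ ^ 2), ?_, ?_, ?_⟩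
  · intro h
    have h0 : c₁ ^ 2 + c₂ ^ 2 + c₃ ^ 2 = 0 := neg_eq_zero.mp h
    exact h3 ⟨c₄, 0, 0, by rw [hsum, h0]; ring⟩
  · exact ⟨c₁, c₂, c₃, 1, fun h => one_ne_zero h.2.2.2, by ring⟩
  · exact ⟨c₄, 1, 1, fun h => one_ne_zero h.2.1, by rw [hsum]; ring⟩
end

section
/- Let $K$ be a field of characteristic not $2$ with level $s(K) \leq 2$. Then the Pythagoras number of $K$ is at most $3$: every sum of squares in $K$ is a sum of at most three squares. -/
theorem pythagoras_le_three_of_level_le_two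
    (K : Type*) [Field K] (hchar : ringChar K ≠ 2)
    (hlev : ∃ d₁ d₂ : K, (-1 : K) = d₁ ^ 2 + d₂ ^ 2) :
    ∀ a : K, IsSumSq a → ∃ c₁ c₂ c₃ : K, a = c₁ ^ 2 + c₂ ^ 2 + c₃ ^ 2 := by
  obtain ⟨d₁, d₂, hd⟩ := hlev
  intro a _
  have h2 : (2 : K) ≠ 0 := Ring.two_ne_zero hchar
  refine ⟨(a + 1) / 2, d₁ * ((a - 1) / 2), d₂ * ((a - 1) / 2), ?_⟩
  field_simp
  linear_combination (a - 1) ^ 2 * hd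
end
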